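/- Let f(x,y) = 4y^3 - 3y·p(x) + q(x) with p(x) = x^4 - 12x^3 + 14x^2 + 12x + 1 and q(x) = (x^2+1)(x^4 - 18x^3 + 74x^2 + 18x + 1). Consider the restriction g_b(x) = f(x, x^2/2 + b x + 1/2) to the section y = x^2/2 + bx + 1/2. Then g_b(x) is divisible by x^2, and the discriminant of the quartic polynomial g_b(x)/x^2 (with respect to x, as a polynomial in x with coefficients depending on b) equals 16(b-3)^3(b+3)^3 up to the appropriate normalization; in particular it vanishes exactly when b = ±3. -/
import Mathlib


open Polynomial

/-- The restriction `g_b(x) = f(x, x²/2 + b·x + 1/2)` of the Weierstraß polynomial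
`f(x,y) = 4y³ - 3y·p(x) + q(x)` to the section `y = x²/2 + b·x + 1/2`,
as a polynomial in `x` over `ℚ`. -/
noncomputable def gSect (b : ℚ) : Polynomial ℚ :=
  let Y : Polynomial ℚ := C (1 / 2) * X ^ 2 + C b * X + C (1 / 2)
  4 * Y ^ 3 - 3 * Y * (X ^ 4 - 12 * X ^ 3 + 14 * X ^ 2 + 12 * X + 1) +
    (X ^ 2 + 1) * (X ^ 4 - 18 * X ^ 3 + 74 * X ^ 2 + 18 * X + 1)

/-- The quadratic cofactor. -/
noncomputable def hSect (b : ℚ) : Polynomial ℚ :=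
  C (6 * b ^ 2 + 36 * b + 54) * X ^ 2 + C (4 * b ^ 3 - 36 * b) * X
    + C (6 * b ^ 2 - 36 * b + 54)

lemma gSect_eq (b : ℚ) : gSect b = X ^ 2 * hSect b := by
  apply Polynomial.funext
  intro x
  simp only [gSect, hSect]
  simp
  ring

lemma divByMonic_gSect (b : ℚ) : gSect b /ₘ X ^ 2 = hSect b := by
  rw [gSect_eq, mul_divByMonic_cancel_left _ (monic_X_pow 2)]

theorem stmt17 :
    (∀ b : ℚ, X ^ 2 ∣ gSect b) ∧
    (∀ b : ℚ,
      let h := gSect b /ₘ X ^ 2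
      discrim (h.coeff 2) (h.coeff 1) (h.coeff 0) = 16 * (b - 3) ^ 3 * (b + 3) ^ 3) ∧
    (∀ b : ℚ,
      let h := gSect b /ₘ X ^ 2
      (discrim (h.coeff 2) (h.coeff 1) (h.coeff 0) = 0 ↔ b = 3 ∨ b = -3)) := by
  have hcoeff : ∀ b : ℚ,
      discrim ((gSect b /ₘ X ^ 2).coeff 2) ((gSect b /ₘ X ^ 2).coeff 1)
        ((gSect b /ₘ X ^ 2).coeff 0) = 16 * (b - 3) ^ 3 * (b + 3) ^ 3 := by
    intro b
    rw [divByMonic_gSect]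
    simp only [hSect, coeff_add, coeff_C_mul, coeff_X_pow, coeff_X, coeff_C, discrim]
    norm_num
    ring
  refine ⟨fun b => ⟨hSect b, gSect_eq b⟩, fun b => hcoeff b, fun b => ?_⟩
  show discrim ((gSect b /ₘ X ^ 2).coeff 2) ((gSect b /ₘ X ^ 2).coeff 1)
      ((gSect b /ₘ X ^ 2).coeff 0) = 0 ↔ b = 3 ∨ b = -3
  rw [hcoeff b]
  constructor
  · intro h
    have h' : (b - 3) ^ 3 * (b + 3) ^ 3 = 0 := by linarith [h]
    rcases mul_eq_zero.mp h' with h'' | h'' <;>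
      [left; right] <;> have := pow_eq_zero_iff (n := 3) (by norm_num) |>.mp h'' <;> linarith
  · rintro (rfl | rfl) <;> ring
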